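/- arXiv:2307.08431 — 3 statements merged into one kernel-verified Lean document; each statement's English description precedes it below -/
import Mathlib

section
/- Let V, Q be real Hilbert spaces, A : V → V' the operator of a bounded coercive symmetric bilinear form, and B : V → Q' bounded and surjective with bounded B'. If λ_min > 0 is the smallest eigenvalue/infimum of the Rayleigh quotient (B A⁻¹ B' q)(q) / ‖q‖_Q² over nonzero q ∈ Q, then the inf-sup condition sup_{v≠0} (B v)(q)/‖v‖_{a} ≥ √λ_min ‖q‖_Q holds for all q ∈ Q, where ‖v‖_a² = (A v)(v). (Qin's lemma: β = √λ_min.) -/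
/-! The Riesz representer `v₀ = A⁻¹ B' q` satisfies `‖v₀‖_a² = (B v₀)(q) ≥ λ_min ‖q‖²`, so the
quotient `(B v₀)(q) / ‖v₀‖_a = √((B v₀)(q))` already reaches `√λ_min ‖q‖`. Coercivity bounds all
quotients by `‖B‖ ‖q‖ / √α`, so the supremum is a genuine one and dominates this value. -/

section EnergyNorm

variable {V : Type*} [NormedAddCommGroup V] [NormedSpace ℝ V]

lemma sqrt_mul_norm_le_sqrt_of_coercive (a : V →L[ℝ] V →L[ℝ] ℝ) {α : ℝ} (hα : 0 ≤ α)
    (hcoer : ∀ v : V, α * ‖v‖ ^ 2 ≤ a v v) (v : V) :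
    Real.sqrt α * ‖v‖ ≤ Real.sqrt (a v v) := by
  rw [← Real.sqrt_sq (norm_nonneg v), ← Real.sqrt_mul hα]
  exact Real.sqrt_le_sqrt (hcoer v)

lemma bddAbove_range_div_sqrt_of_coercive {Q : Type*} [NormedAddCommGroup Q] [NormedSpace ℝ Q]
    (a : V →L[ℝ] V →L[ℝ] ℝ) {α : ℝ} (hα : 0 < α) (hcoer : ∀ v : V, α * ‖v‖ ^ 2 ≤ a v v)
    (B : V →L[ℝ] Q →L[ℝ] ℝ) (q : Q) :
    BddAbove (Set.range fun v : {v : V // v ≠ 0} => B v.1 q / Real.sqrt (a v.1 v.1)) := by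
  refine ⟨‖B‖ * ‖q‖ / Real.sqrt α, ?_⟩
  rintro _ ⟨⟨v, hv⟩, rfl⟩
  have hv : 0 < ‖v‖ := norm_pos_iff.mpr hv
  have hB : B v q ≤ ‖B‖ * ‖v‖ * ‖q‖ :=
    (le_abs_self _).trans (B.le_opNorm₂ v q)
  calc B v q / Real.sqrt (a v v)
      ≤ ‖B‖ * ‖v‖ * ‖q‖ / (Real.sqrt α * ‖v‖) :=
        div_le_div₀ (by positivity) hB (by positivity)
          (sqrt_mul_norm_le_sqrt_of_coercive a hα.le hcoer v)
    _ = ‖B‖ * ‖q‖ / Real.sqrt α := by field_simp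

lemma apply_apply_of_rightInverse (a : V →L[ℝ] V →L[ℝ] ℝ) (Ainv : (V →L[ℝ] ℝ) →L[ℝ] V)
    (hA : ∀ f : V →L[ℝ] ℝ, a (Ainv f) = f) (f : V →L[ℝ] ℝ) :
    a (Ainv f) (Ainv f) = f (Ainv f) := by
  rw [hA f]

end EnergyNorm

theorem stmt10_general {V Q : Type*}
    [NormedAddCommGroup V] [InnerProductSpace ℝ V]
    [NormedAddCommGroup Q] [InnerProductSpace ℝ Q]
    (a : V →L[ℝ] V →L[ℝ] ℝ) (α : ℝ) (hα : 0 < α)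
    (hcoer : ∀ v : V, α * ‖v‖ ^ 2 ≤ a v v)
    (B : V →L[ℝ] Q →L[ℝ] ℝ)
    (Ainv : (V →L[ℝ] ℝ) →L[ℝ] V)
    (hA1 : ∀ f : V →L[ℝ] ℝ, a (Ainv f) = f)
    (lmin : ℝ) (hlmin : 0 < lmin)
    (hglb : IsGLB {r : ℝ | ∃ q : Q, q ≠ 0 ∧ r = B (Ainv (B.flip q)) q / ‖q‖ ^ 2} lmin) :
    ∀ q : Q,
      Real.sqrt lmin * ‖q‖ ≤
        ⨆ v : {v : V // v ≠ 0}, B v.1 q / Real.sqrt (a v.1 v.1) := by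
  intro q
  rcases eq_or_ne q 0 with rfl | hq
  · simp
  set v₀ := Ainv (B.flip q)
  have hc : a v₀ v₀ = B v₀ q := apply_apply_of_rightInverse a Ainv hA1 (B.flip q)
  have hBq : lmin * ‖q‖ ^ 2 ≤ B v₀ q :=
    (le_div_iff₀ (by positivity)).mp (hglb.1 ⟨q, hq, rfl⟩)
  have hv₀ : v₀ ≠ 0 := by
    intro h
    have : lmin * ‖q‖ ^ 2 ≤ 0 := by simpa [h] using hBq
    have : 0 < lmin * ‖q‖ ^ 2 := by positivity
    linarith
  calc Real.sqrt lmin * ‖q‖ = Real.sqrt (lmin * ‖q‖ ^ 2) := by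
        rw [Real.sqrt_mul hlmin.le, Real.sqrt_sq (norm_nonneg q)]
    _ ≤ Real.sqrt (B v₀ q) := Real.sqrt_le_sqrt hBq
    _ = B v₀ q / Real.sqrt (a v₀ v₀) := by rw [hc, Real.div_sqrt]
    _ ≤ ⨆ v : {v : V // v ≠ 0}, B v.1 q / Real.sqrt (a v.1 v.1) :=
        le_ciSup (bddAbove_range_div_sqrt_of_coercive a hα hcoer B q) ⟨v₀, hv₀⟩

theorem stmt10 {V Q : Type*}
    [NormedAddCommGroup V] [InnerProductSpace ℝ V] [CompleteSpace V]
    [NormedAddCommGroup Q] [InnerProductSpace ℝ Q] [CompleteSpace Q]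
    (a : V →L[ℝ] V →L[ℝ] ℝ) (α : ℝ) (hα : 0 < α)
    (hsymm : ∀ u v : V, a u v = a v u)
    (hcoer : ∀ v : V, α * ‖v‖ ^ 2 ≤ a v v)
    (B : V →L[ℝ] Q →L[ℝ] ℝ) (hsurj : Function.Surjective B)
    (Ainv : (V →L[ℝ] ℝ) →L[ℝ] V)
    (hA1 : ∀ f : V →L[ℝ] ℝ, a (Ainv f) = f)
    (hA2 : ∀ u : V, Ainv (a u) = u)
    (lmin : ℝ) (hlmin : 0 < lmin)
    (hglb : IsGLB {r : ℝ | ∃ q : Q, q ≠ 0 ∧ r = B (Ainv (B.flip q)) q / ‖q‖ ^ 2} lmin) :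
    ∀ q : Q,
      Real.sqrt lmin * ‖q‖ ≤
        ⨆ v : {v : V // v ≠ 0}, B v.1 q / Real.sqrt (a v.1 v.1) :=
  stmt10_general a α hα hcoer B Ainv hA1 lmin hlmin hglb
end

section
/- Let X₁, X₂, X₃ be real Hilbert spaces, A : X₁×X₂ → (X₁×X₂)' induced by a bounded symmetric coercive bilinear form a with constants α ≤ M, and B : X₁×X₂ → X₃' induced by a bounded bilinear form b with boundedness constant C_B satisfying the inf-sup condition with constant β > 0. Then the saddle-point operator 𝒜 = [[A, B'],[B, 0]] : X → X' on X = X₁×X₂×X₃ is an isomorphism, i.e. boundedly invertible, provided a is coercive on all of X₁×X₂. -/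
/-!
With `A u = a(u, ·)` and `B' p = b(·, p)`, the system `A u + B' p = f`, `b(u, ·) = g` is solved by
eliminating `u = A⁻¹ (f - B' p)`, which leaves the Schur complement equation
`b(A⁻¹ B' p, ·) = b(A⁻¹ f, ·) - g` on `X₃`. Its form `s(p, q) = b(A⁻¹ B' p, q)` is coercive: for
`w = A⁻¹ B' q` one has `s(q, q) = a(w, w) ≥ α ‖w‖²`, while the inf-sup condition gives
`β ‖q‖ ≤ ‖B' q‖ = ‖A w‖ ≤ ‖A‖ ‖w‖`; so Lax–Milgram solves it. Invertibility of `A` is Lax–Milgram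
on the Hilbert space `WithLp 2 (X₁ × X₂)`, whose norm is equivalent to the sup norm of `X₁ × X₂`,
and the inverse of the saddle-point operator is bounded by the open mapping theorem.
-/

open InnerProductSpace RealInnerProductSpace ContinuousLinearMap

noncomputable section

namespace IsCoercive

variable {V W H : Type*} [NormedAddCommGroup V] [NormedSpace ℝ V]
  [NormedAddCommGroup W] [NormedSpace ℝ W]
  [NormedAddCommGroup H] [InnerProductSpace ℝ H] [CompleteSpace H]
  {a : V →L[ℝ] V →L[ℝ] ℝ}

theorem eq_zero_of_apply_self_eq_zero (ha : IsCoercive a) {u : V} (hu : a u u = 0) : u = 0 := by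
  obtain ⟨C, hC, hcoer⟩ := ha
  have hnonpos : C * (‖u‖ * ‖u‖) ≤ 0 := by simpa [hu, mul_assoc] using hcoer u
  exact norm_eq_zero.1 <| mul_self_eq_zero.1 <| le_antisymm
    (nonpos_of_mul_nonpos_right hnonpos hC) (mul_self_nonneg _)

theorem injective (ha : IsCoercive a) : Function.Injective a :=
  (injective_iff_map_eq_zero a).2 fun u hu =>
    ha.eq_zero_of_apply_self_eq_zero (by rw [hu, zero_apply])

theorem surjective {a : H →L[ℝ] H →L[ℝ] ℝ} (ha : IsCoercive a) :
    Function.Surjective a := by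
  intro φ
  refine ⟨ha.continuousLinearEquivOfBilin.symm ((toDual ℝ H).symm φ), ext fun v => ?_⟩
  rw [← ha.continuousLinearEquivOfBilin_apply, ContinuousLinearEquiv.apply_symm_apply,
    toDual_symm_apply]

theorem bilinearComp (ha : IsCoercive a) (e : W ≃L[ℝ] V) :
    IsCoercive (a.bilinearComp (e : W →L[ℝ] V) (e : W →L[ℝ] V)) := by
  obtain ⟨C, hC, hcoer⟩ := ha
  obtain ⟨K, hK, hle⟩ := (e.symm : V →L[ℝ] W).bound
  refine ⟨C / K ^ 2, by positivity, fun x => ?_⟩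
  have hx : ‖x‖ ≤ K * ‖e x‖ := by simpa using hle (e x)
  calc C / K ^ 2 * ‖x‖ * ‖x‖ ≤ C / K ^ 2 * (K * ‖e x‖) * (K * ‖e x‖) := by gcongr
    _ = C * ‖e x‖ * ‖e x‖ := by field_simp
    _ ≤ a (e x) (e x) := hcoer (e x)

theorem bijective_of_equiv (ha : IsCoercive a) (e : H ≃L[ℝ] V) : Function.Bijective a := by
  refine ⟨ha.injective, fun φ => ?_⟩
  obtain ⟨x, hx⟩ := (ha.bilinearComp e).surjective (φ.comp (e : H →L[ℝ] V))
  refine ⟨e x, ext fun v => ?_⟩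
  simpa using congr($hx (e.symm v))

end IsCoercive

theorem iSup_div_norm_le_norm_flip {V Q : Type*} [NormedAddCommGroup V] [NormedSpace ℝ V]
    [NormedAddCommGroup Q] [NormedSpace ℝ Q] (b : V →L[ℝ] Q →L[ℝ] ℝ) (q : Q) :
    ⨆ v : {v : V // v ≠ 0}, b v.1 q / ‖v.1‖ ≤ ‖b.flip q‖ := by
  refine Real.iSup_le (fun v => div_le_of_le_mul₀ (norm_nonneg _) (norm_nonneg _) ?_)
    (norm_nonneg _)
  calc b v.1 q = b.flip q v.1 := rfl
    _ ≤ ‖b.flip q v.1‖ := Real.le_norm_self _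
    _ ≤ ‖b.flip q‖ * ‖v.1‖ := le_opNorm _ _

section SaddlePoint

variable {V Q : Type*} [NormedAddCommGroup V] [NormedSpace ℝ V]
  [NormedAddCommGroup Q] [NormedSpace ℝ Q]
  {a : V →L[ℝ] V →L[ℝ] ℝ} {b : V →L[ℝ] Q →L[ℝ] ℝ} {β : ℝ}

variable (a b) in
def saddlePointOperator : V × Q →L[ℝ] V × Q →L[ℝ] ℝ :=
  a.bilinearComp (fst ℝ V Q) (fst ℝ V Q) + b.flip.bilinearComp (snd ℝ V Q) (fst ℝ V Q)
    + b.bilinearComp (fst ℝ V Q) (snd ℝ V Q)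

@[simp]
theorem saddlePointOperator_apply (u : V) (p : Q) (v : V) (q : Q) :
    saddlePointOperator a b (u, p) (v, q) = a u v + b v p + b u q :=
  rfl

/-- With `a ∘ w = B'`, the form `b.comp w` is the Schur complement `(p, q) ↦ b(A⁻¹ B' p, q)`. -/
theorem isCoercive_comp_of_infSup (ha : IsCoercive a) (hβ : 0 < β)
    (hinfsup : ∀ q, β * ‖q‖ ≤ ‖b.flip q‖) {w : Q →L[ℝ] V} (hw : ∀ q, a (w q) = b.flip q) :
    IsCoercive (b.comp w) := by
  obtain ⟨α, hα, hcoer⟩ := ha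
  obtain ⟨C, hC, hbound⟩ := a.bound
  refine ⟨α * (β / C) ^ 2, by positivity, fun q => ?_⟩
  have hw_lower : β / C * ‖q‖ ≤ ‖w q‖ := by
    rw [div_mul_eq_mul_div, div_le_iff₀ hC]
    calc β * ‖q‖ ≤ ‖b.flip q‖ := hinfsup q
      _ = ‖a (w q)‖ := by rw [hw]
      _ ≤ C * ‖w q‖ := hbound _
      _ = ‖w q‖ * C := mul_comm _ _
  calc α * (β / C) ^ 2 * ‖q‖ * ‖q‖ = α * (β / C * ‖q‖) * (β / C * ‖q‖) := by ring
    _ ≤ α * ‖w q‖ * ‖w q‖ := by gcongr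
    _ ≤ a (w q) (w q) := hcoer _
    _ = b.comp w q q := by rw [hw]; rfl

theorem saddlePointOperator_injective (ha : IsCoercive a) (hβ : 0 < β)
    (hinfsup : ∀ q, β * ‖q‖ ≤ ‖b.flip q‖) : Function.Injective (saddlePointOperator a b) := by
  refine (injective_iff_map_eq_zero _).2 fun ⟨u, p⟩ h => ?_
  have hfirst : a u + b.flip p = 0 := ext fun v => by simpa using congr($h (v, 0))
  have hsecond : b u = 0 := ext fun q => by simpa using congr($h (0, q))
  have hu : u = 0 := ha.eq_zero_of_apply_self_eq_zero <| by
    have h1 : a u u + b u p = 0 := by simpa using congr($hfirst u)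
    have h2 : b u p = 0 := by simp [hsecond]
    linarith
  have hflip : b.flip p = 0 := by simpa [hu] using hfirst
  have hp : β * ‖p‖ ≤ 0 := by simpa [hflip] using hinfsup p
  simpa [hu] using (nonpos_of_mul_nonpos_right hp hβ).antisymm (norm_nonneg p)

variable [CompleteSpace V] [CompleteSpace Q]

def saddlePointEquiv (h : Function.Bijective (saddlePointOperator a b)) :
    (V × Q) ≃L[ℝ] (V × Q →L[ℝ] ℝ) :=
  .ofBijective (saddlePointOperator a b) (LinearMap.ker_eq_bot_of_injective h.1)
    (LinearMap.range_eq_top_of_surjective _ h.2)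

@[simp]
theorem saddlePointEquiv_apply (h : Function.Bijective (saddlePointOperator a b)) (u : V) (p : Q)
    (v : V) (q : Q) : saddlePointEquiv h (u, p) (v, q) = a u v + b v p + b u q :=
  rfl

end SaddlePoint

section SaddlePointHilbert

variable {V Q : Type*} [NormedAddCommGroup V] [NormedSpace ℝ V] [CompleteSpace V]
  [NormedAddCommGroup Q] [InnerProductSpace ℝ Q] [CompleteSpace Q]
  {a : V →L[ℝ] V →L[ℝ] ℝ} {b : V →L[ℝ] Q →L[ℝ] ℝ} {β : ℝ}

theorem saddlePointOperator_surjective (ha : IsCoercive a) (ha_bij : Function.Bijective a)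
    (hβ : 0 < β) (hinfsup : ∀ q, β * ‖q‖ ≤ ‖b.flip q‖) :
    Function.Surjective (saddlePointOperator a b) := by
  intro F
  let A := ContinuousLinearEquiv.ofBijective a (LinearMap.ker_eq_bot.2 ha_bij.1)
    (LinearMap.range_eq_top.2 ha_bij.2)
  let w : Q →L[ℝ] V := (A.symm : (V →L[ℝ] ℝ) →L[ℝ] V).comp b.flip
  have hw : ∀ q, a (w q) = b.flip q := fun q => A.apply_symm_apply _
  let f := F.comp (inl ℝ V Q)
  let g := F.comp (inr ℝ V Q)
  obtain ⟨p, hp⟩ :=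
    (isCoercive_comp_of_infSup ha hβ hinfsup hw).surjective (b (A.symm f) - g)
  refine ⟨(A.symm (f - b.flip p), p), ext fun ⟨v, q⟩ => ?_⟩
  have hu : a (A.symm (f - b.flip p)) = f - b.flip p := A.apply_symm_apply _
  have hs : b (A.symm (b.flip p)) q = b (A.symm f) q - g q := congr($hp q)
  have hF : F (v, q) = f v + g q := by simp [f, g, ← map_add]
  rw [saddlePointOperator_apply, hu, hF, map_sub A.symm, map_sub b]
  simp only [sub_apply, flip_apply, hs]
  ring

theorem saddlePointOperator_bijective (ha : IsCoercive a) (ha_bij : Function.Bijective a)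
    (hβ : 0 < β) (hinfsup : ∀ q, β * ‖q‖ ≤ ‖b.flip q‖) :
    Function.Bijective (saddlePointOperator a b) :=
  ⟨saddlePointOperator_injective ha hβ hinfsup,
    saddlePointOperator_surjective ha ha_bij hβ hinfsup⟩

end SaddlePointHilbert

end

theorem stmt14_general {X₁ X₂ X₃ : Type*}
    [NormedAddCommGroup X₁] [InnerProductSpace ℝ X₁] [CompleteSpace X₁]
    [NormedAddCommGroup X₂] [InnerProductSpace ℝ X₂] [CompleteSpace X₂]
    [NormedAddCommGroup X₃] [InnerProductSpace ℝ X₃] [CompleteSpace X₃]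
    (a : (X₁ × X₂) →L[ℝ] (X₁ × X₂) →L[ℝ] ℝ)
    (b : (X₁ × X₂) →L[ℝ] X₃ →L[ℝ] ℝ)
    (α β : ℝ) (hα : 0 < α) (hβ : 0 < β)
    (hcoer : ∀ u : X₁ × X₂, α * ‖u‖ ^ 2 ≤ a u u)
    (hinfsup : ∀ q : X₃,
        β * ‖q‖ ≤ ⨆ v : {v : X₁ × X₂ // v ≠ 0}, b v.1 q / ‖v.1‖) :
    ∃ e : ((X₁ × X₂) × X₃) ≃L[ℝ] (((X₁ × X₂) × X₃) →L[ℝ] ℝ),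
      ∀ (u : X₁ × X₂) (p : X₃) (v : X₁ × X₂) (q : X₃),
        e (u, p) (v, q) = a u v + b v p + b u q := by
  have ha : IsCoercive a := ⟨α, hα, fun u => by simpa [sq, mul_assoc] using hcoer u⟩
  have ha_bij := ha.bijective_of_equiv (WithLp.prodContinuousLinearEquiv 2 ℝ X₁ X₂)
  have hinfsup' : ∀ q, β * ‖q‖ ≤ ‖b.flip q‖ :=
    fun q => (hinfsup q).trans (iSup_div_norm_le_norm_flip b q)
  have hT := saddlePointOperator_bijective ha ha_bij hβ hinfsup'
  exact ⟨saddlePointEquiv hT, saddlePointEquiv_apply hT⟩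

theorem stmt14 {X₁ X₂ X₃ : Type*}
    [NormedAddCommGroup X₁] [InnerProductSpace ℝ X₁] [CompleteSpace X₁]
    [NormedAddCommGroup X₂] [InnerProductSpace ℝ X₂] [CompleteSpace X₂]
    [NormedAddCommGroup X₃] [InnerProductSpace ℝ X₃] [CompleteSpace X₃]
    (a : (X₁ × X₂) →L[ℝ] (X₁ × X₂) →L[ℝ] ℝ)
    (b : (X₁ × X₂) →L[ℝ] X₃ →L[ℝ] ℝ)
    (α M C_B β : ℝ) (hα : 0 < α) (hαM : α ≤ M) (hβ : 0 < β)
    (hsymm : ∀ u v : X₁ × X₂, a u v = a v u)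
    (haM : ∀ u v : X₁ × X₂, |a u v| ≤ M * ‖u‖ * ‖v‖)
    (hcoer : ∀ u : X₁ × X₂, α * ‖u‖ ^ 2 ≤ a u u)
    (hbC : ∀ (v : X₁ × X₂) (q : X₃), |b v q| ≤ C_B * ‖v‖ * ‖q‖)
    (hinfsup : ∀ q : X₃,
        β * ‖q‖ ≤ ⨆ v : {v : X₁ × X₂ // v ≠ 0}, b v.1 q / ‖v.1‖) :
    ∃ e : ((X₁ × X₂) × X₃) ≃L[ℝ] (((X₁ × X₂) × X₃) →L[ℝ] ℝ),
      ∀ (u : X₁ × X₂) (p : X₃) (v : X₁ × X₂) (q : X₃),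
        e (u, p) (v, q) = a u v + b v p + b u q :=
  stmt14_general a b α β hα hβ hcoer hinfsup
end

section
/- Let V₁, V₂, Q be real Hilbert spaces and b a bounded bilinear form on (V₁ × V₂) × Q. Suppose there exist maps û : Q → V₁ and û₂ : Q → V₂ and constants c₁, c₂ > 0 such that for every q ∈ Q: b([û(q), û₂(q)], q) ≥ ‖q‖_{Q₁}² + ‖q‖_{Q₂}², ‖û(q)‖_{V₁} ≤ c₁ ‖q‖_{Q₁}, and ‖û₂(q)‖_{V₂} ≤ c₂ ‖q‖_{Q₂}, where ‖q‖_Q² = ‖q‖_{Q₁}² + ‖q‖_{Q₂}². Then b satisfies the inf-sup condition on (V₁×V₂) × Q with constant β ≥ 1/max(c₁, c₂), where the norm on V₁×V₂ is (‖v₁‖²+‖v₂‖²)^{1/2}. -/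
/-!
The Fortin-type witness `w = (u₁ q, u₂ q)` satisfies `b(w, q) ≥ n₁(q)² + n₂(q)² = ‖q‖²`, while its
Euclidean norm obeys `‖u₁ q‖² + ‖u₂ q‖² ≤ c₁² n₁(q)² + c₂² n₂(q)² ≤ max(c₁, c₂)² ‖q‖²`. So `w` alone
makes the ratio at least `‖q‖ / max(c₁, c₂)`; the supremum is finite because `b` is bounded.
-/

section EuclideanProductNorm

variable {E F : Type*} [NormedAddCommGroup E] [NormedAddCommGroup F]

lemma Prod.norm_le_sqrt_norm_fst_sq_add_norm_snd_sq (v : E × F) :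
    ‖v‖ ≤ √(‖v.1‖ ^ 2 + ‖v.2‖ ^ 2) := by
  rw [Prod.norm_def]
  refine max_le ?_ ?_ <;> rw [Real.le_sqrt (norm_nonneg _)] <;>
    nlinarith [sq_nonneg ‖v.1‖, sq_nonneg ‖v.2‖]

lemma Prod.sqrt_norm_fst_sq_add_norm_snd_sq_pos {v : E × F} (hv : v ≠ 0) :
    0 < √(‖v.1‖ ^ 2 + ‖v.2‖ ^ 2) :=
  (norm_pos_iff.mpr hv).trans_le (Prod.norm_le_sqrt_norm_fst_sq_add_norm_snd_sq v)

variable [NormedSpace ℝ E] [NormedSpace ℝ F]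

lemma ContinuousLinearMap.apply_div_sqrt_le_opNorm (ℓ : E × F →L[ℝ] ℝ) (v : E × F) :
    ℓ v / √(‖v.1‖ ^ 2 + ‖v.2‖ ^ 2) ≤ ‖ℓ‖ :=
  div_le_of_le_mul₀ (Real.sqrt_nonneg _) (norm_nonneg ℓ) <|
    calc ℓ v ≤ ‖ℓ‖ * ‖v‖ := (le_abs_self _).trans (ℓ.le_opNorm v)
      _ ≤ ‖ℓ‖ * √(‖v.1‖ ^ 2 + ‖v.2‖ ^ 2) :=
        mul_le_mul_of_nonneg_left (Prod.norm_le_sqrt_norm_fst_sq_add_norm_snd_sq v) (norm_nonneg ℓ)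

lemma ContinuousLinearMap.bddAbove_range_apply_div_sqrt (ℓ : E × F →L[ℝ] ℝ) :
    BddAbove (Set.range fun v : {v : E × F // v ≠ 0} => ℓ v.1 / √(‖v.1.1‖ ^ 2 + ‖v.1.2‖ ^ 2)) :=
  ⟨‖ℓ‖, by rintro _ ⟨v, rfl⟩; exact ℓ.apply_div_sqrt_le_opNorm v.1⟩

end EuclideanProductNorm

lemma sq_add_sq_le_max_sq_mul_sq_add_sq {a b x y c₁ c₂ : ℝ} (ha : 0 ≤ a) (hb : 0 ≤ b)
    (hc₁ : 0 ≤ c₁) (hc₂ : 0 ≤ c₂) (hax : a ≤ c₁ * x) (hby : b ≤ c₂ * y) :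
    a ^ 2 + b ^ 2 ≤ max c₁ c₂ ^ 2 * (x ^ 2 + y ^ 2) := by
  have h₁ : a ^ 2 ≤ c₁ ^ 2 * x ^ 2 := by rw [← mul_pow]; exact pow_le_pow_left₀ ha hax 2
  have h₂ : b ^ 2 ≤ c₂ ^ 2 * y ^ 2 := by rw [← mul_pow]; exact pow_le_pow_left₀ hb hby 2
  have k₁ : c₁ ^ 2 ≤ max c₁ c₂ ^ 2 := pow_le_pow_left₀ hc₁ (le_max_left _ _) 2
  have k₂ : c₂ ^ 2 ≤ max c₁ c₂ ^ 2 := pow_le_pow_left₀ hc₂ (le_max_right _ _) 2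
  nlinarith [mul_le_mul_of_nonneg_right k₁ (sq_nonneg x),
    mul_le_mul_of_nonneg_right k₂ (sq_nonneg y)]

theorem stmt18_general {V₁ V₂ Q : Type*}
    [NormedAddCommGroup V₁] [InnerProductSpace ℝ V₁]
    [NormedAddCommGroup V₂] [InnerProductSpace ℝ V₂]
    [NormedAddCommGroup Q] [InnerProductSpace ℝ Q]
    (b : (V₁ × V₂) →L[ℝ] Q →L[ℝ] ℝ)
    (n₁ n₂ : Q → ℝ) (hn : ∀ q : Q, ‖q‖ ^ 2 = n₁ q ^ 2 + n₂ q ^ 2)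
    (u₁ : Q → V₁) (u₂ : Q → V₂) (c₁ c₂ : ℝ) (hc₁ : 0 < c₁) (hc₂ : 0 < c₂)
    (hb : ∀ q : Q, n₁ q ^ 2 + n₂ q ^ 2 ≤ b (u₁ q, u₂ q) q)
    (h₁ : ∀ q : Q, ‖u₁ q‖ ≤ c₁ * n₁ q)
    (h₂ : ∀ q : Q, ‖u₂ q‖ ≤ c₂ * n₂ q) :
    ∀ q : Q,
      (1 / max c₁ c₂) * ‖q‖ ≤
        ⨆ v : {v : V₁ × V₂ // v ≠ 0},
          b v.1 q / Real.sqrt (‖v.1.1‖ ^ 2 + ‖v.1.2‖ ^ 2) := by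
  intro q
  rcases eq_or_ne q 0 with rfl | hq
  · simp
  set w : V₁ × V₂ := (u₁ q, u₂ q)
  have hM : 0 < max c₁ c₂ := lt_max_of_lt_left hc₁
  have hbw : ‖q‖ ^ 2 ≤ b w q := hn q ▸ hb q
  have hw : w ≠ 0 := fun hw => by simp [hw, hq] at hbw
  have hwq : √(‖w.1‖ ^ 2 + ‖w.2‖ ^ 2) ≤ max c₁ c₂ * ‖q‖ := by
    rw [Real.sqrt_le_left (by positivity), mul_pow, hn q]
    exact sq_add_sq_le_max_sq_mul_sq_add_sq (norm_nonneg _) (norm_nonneg _) hc₁.le hc₂.le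
      (h₁ q) (h₂ q)
  calc 1 / max c₁ c₂ * ‖q‖ = ‖q‖ ^ 2 / (max c₁ c₂ * ‖q‖) := by field_simp
    _ ≤ b w q / √(‖w.1‖ ^ 2 + ‖w.2‖ ^ 2) :=
      div_le_div₀ ((sq_nonneg _).trans hbw) hbw (Prod.sqrt_norm_fst_sq_add_norm_snd_sq_pos hw) hwq
    _ ≤ _ := le_ciSup (b.flip q).bddAbove_range_apply_div_sqrt ⟨w, hw⟩

theorem stmt18 {V₁ V₂ Q : Type*}
    [NormedAddCommGroup V₁] [InnerProductSpace ℝ V₁] [CompleteSpace V₁]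
    [NormedAddCommGroup V₂] [InnerProductSpace ℝ V₂] [CompleteSpace V₂]
    [NormedAddCommGroup Q] [InnerProductSpace ℝ Q] [CompleteSpace Q]
    (b : (V₁ × V₂) →L[ℝ] Q →L[ℝ] ℝ)
    (n₁ n₂ : Q → ℝ) (hn : ∀ q : Q, ‖q‖ ^ 2 = n₁ q ^ 2 + n₂ q ^ 2)
    (u₁ : Q → V₁) (u₂ : Q → V₂) (c₁ c₂ : ℝ) (hc₁ : 0 < c₁) (hc₂ : 0 < c₂)
    (hb : ∀ q : Q, n₁ q ^ 2 + n₂ q ^ 2 ≤ b (u₁ q, u₂ q) q)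
    (h₁ : ∀ q : Q, ‖u₁ q‖ ≤ c₁ * n₁ q)
    (h₂ : ∀ q : Q, ‖u₂ q‖ ≤ c₂ * n₂ q) :
    ∀ q : Q,
      (1 / max c₁ c₂) * ‖q‖ ≤
        ⨆ v : {v : V₁ × V₂ // v ≠ 0},
          b v.1 q / Real.sqrt (‖v.1.1‖ ^ 2 + ‖v.1.2‖ ^ 2) :=
  stmt18_general b n₁ n₂ hn u₁ u₂ c₁ c₂ hc₁ hc₂ hb h₁ h₂
end
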